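/- Fix k ∈ {0,1} and l ∈ ℂ with l+k not an odd integer (equivalently 2p+k+l-1 ≠ 0 and 2p+k-l-1 ≠ 0 for all p ∈ ℤ). Define α₀ = 1 and α_p = ((2p+k-l-1)/(2p+k+l-1)) α_{p-1} for p > 0, and the analogous backwards recursion for p < 0. Then the linear map A sending e_p ↦ α_p e_p intertwines the principal series module with parameter -l and the one with parameter l: A∘E_{(-l)} = E_{(l)}∘A, A∘F_{(-l)} = F_{(l)}∘A, A∘H_{(-l)} = H_{(l)}∘A, where E_{(l)} e_p = (-(p+k/2)-(l-1)/2)e_{p-1}, F_{(l)} e_p = ((p+k/2)-(l-1)/2)e_{p+1}, H_{(l)} e_p = -2(p+k/2)e_p. -/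

import Mathlib

/-- Operator on the free ℂ-module on basis `(e_p)_{p ∈ ℤ}` (encoded as `ℤ →₀ ℂ`)
sending `e_p` to `a p • e_(p+s)`. -/
noncomputable def sop (a : ℤ → ℂ) (s : ℤ) : Module.End ℂ (ℤ →₀ ℂ) :=
  Finsupp.lsum ℂ fun p => a p • Finsupp.lsingle (p + s)

/-- `E_(l) e_p = (-(p + k/2) - (l-1)/2) e_(p-1)`. -/
noncomputable def Eop (k l : ℂ) : Module.End ℂ (ℤ →₀ ℂ) :=
  sop (fun p => -((p : ℂ) + k / 2) - (l - 1) / 2) (-1)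
/-- `F_(l) e_p = ((p + k/2) - (l-1)/2) e_(p+1)`. -/
noncomputable def Fop (k l : ℂ) : Module.End ℂ (ℤ →₀ ℂ) :=
  sop (fun p => ((p : ℂ) + k / 2) - (l - 1) / 2) 1
/-- `H e_p = -2 (p + k/2) e_p`. -/
noncomputable def Hop (k : ℂ) : Module.End ℂ (ℤ →₀ ℂ) :=
  sop (fun p => -2 * ((p : ℂ) + k / 2)) 0

/-- The diagonal operator `e_p ↦ α_p e_p`. -/
noncomputable def Aop (α : ℤ → ℂ) : Module.End ℂ (ℤ →₀ ℂ) := sop α 0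

/-! Every operator of the statement is a weighted shift `sop a s`, and `A` is the weighted shift
by `0`. The product of two weighted shifts is again one, so each of the three identities reduces
to an identity of weights at each `p`; for `E` and `F` this is the recursion for `α`, cleared of
its denominator. -/

lemma sop_single (a : ℤ → ℂ) (s p : ℤ) (c : ℂ) :
    sop a s (Finsupp.single p c) = Finsupp.single (p + s) (a p * c) := by
  rw [sop, Finsupp.lsum_single, LinearMap.smul_apply, Finsupp.lsingle_apply,
    Finsupp.smul_single, smul_eq_mul]

lemma sop_mul_sop (a b : ℤ → ℂ) (s t : ℤ) :
    sop a s * sop b t = sop (fun p => b p * a (p + t)) (t + s) := by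
  refine Finsupp.lhom_ext fun p c => ?_
  simp only [Module.End.mul_apply, sop_single, add_assoc]
  congr 1
  ring

lemma Aop_mul_sop_eq_sop_mul_Aop {α a b : ℤ → ℂ} {s : ℤ}
    (h : ∀ p, a p * α (p + s) = α p * b p) :
    Aop α * sop a s = sop b s * Aop α := by
  simp only [Aop, sop_mul_sop, add_zero, zero_add]
  exact congrArg (sop · s) (funext h)

lemma mul_denom_eq_of_rec {K : Type*} [Field K] {α x y : ℤ → K} (hy : ∀ p, y p ≠ 0)
    (hrec : ∀ p, α p = x p / y p * α (p - 1)) (p : ℤ) :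
    α p * y p = x p * α (p - 1) := by
  rw [hrec p, div_mul_eq_mul_div, div_mul_cancel₀ _ (hy p)]

theorem intertwining_operator_general (k l : ℂ)
    (hden : ∀ p : ℤ, 2 * (p : ℂ) + k + l - 1 ≠ 0 ∧ 2 * (p : ℂ) + k - l - 1 ≠ 0)
    (α : ℤ → ℂ)
    (hrec : ∀ p : ℤ,
      α p = ((2 * (p : ℂ) + k - l - 1) / (2 * (p : ℂ) + k + l - 1)) * α (p - 1)) :
    Aop α * Eop k (-l) = Eop k l * Aop α ∧
    Aop α * Fop k (-l) = Fop k l * Aop α ∧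
    Aop α * Hop k = Hop k * Aop α := by
  have key := mul_denom_eq_of_rec (fun p => (hden p).1) hrec
  refine ⟨Aop_mul_sop_eq_sop_mul_Aop fun p => ?_, Aop_mul_sop_eq_sop_mul_Aop fun p => ?_,
    Aop_mul_sop_eq_sop_mul_Aop fun p => ?_⟩
  · rw [← sub_eq_add_neg]
    linear_combination (1 / 2 : ℂ) * key p
  · have h := key (p + 1)
    rw [add_sub_cancel_right] at h
    push_cast at h
    linear_combination (1 / 2 : ℂ) * h
  · rw [add_zero]
    ring

theorem intertwining_operator (k l : ℂ) (hk : k = 0 ∨ k = 1)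
    (hden : ∀ p : ℤ, 2 * (p : ℂ) + k + l - 1 ≠ 0 ∧ 2 * (p : ℂ) + k - l - 1 ≠ 0)
    (α : ℤ → ℂ) (hα0 : α 0 = 1)
    (hrec : ∀ p : ℤ,
      α p = ((2 * (p : ℂ) + k - l - 1) / (2 * (p : ℂ) + k + l - 1)) * α (p - 1)) :
    Aop α * Eop k (-l) = Eop k l * Aop α ∧
    Aop α * Fop k (-l) = Fop k l * Aop α ∧
    Aop α * Hop k = Hop k * Aop α :=
  intertwining_operator_general k l hden α hrec
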